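/- Define σ*(t) = 3/(4t²) + 15/(16(t−1)²) + 103/(144t) − 103/(144(t−1)) for t ∈ ℂ with t ≠ 0, 1, and define the rational map w(λ) = 1 − 27λ/(4(λ−1)³). For every λ ∈ ℂ with λ·(λ−1)·(λ−4)·(2λ+1) ≠ 0 and 4(λ−1)³ ≠ 27λ, one has 3·(20 − 33λ + 28λ² − 7λ³ + λ⁴)/(4·λ²·(4 − 5λ + λ²)²) = w'(λ)²·σ*(w(λ)) + (2·w'(λ)·w'''(λ) − 3·w''(λ)²)/w'(λ)². -/

import Mathlib

/-- The sigma invariant of the quotient Shimura curve `V₆* = V₆/⟨w₂,w₃⟩` of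
discriminant 6, in a coordinate with elliptic points of indices 2, 4, 6 at
`t = 0, 1, ∞`. -/
noncomputable def sigmaStar (t : ℂ) : ℂ :=
  3 / (4 * t ^ 2) + 15 / (16 * (t - 1) ^ 2) + 103 / (144 * t) - 103 / (144 * (t - 1))

/-- The degree-3 covering map `t = w(λ) = 1 - 27λ/(4(λ-1)³)` from the λ-line of the
family of twists No. 6 to `V₆*`. -/
noncomputable def wCover (lam : ℂ) : ℂ := 1 - 27 * lam / (4 * (lam - 1) ^ 3)

/-!
Since `λ/(λ-1)³ = (λ-1)⁻² + (λ-1)⁻³`, the map `w` is a constant plus a two-term Laurent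
polynomial `p (λ-1)^m + q (λ-1)^(m-1)`, and this shape is preserved by differentiation, so
`w'`, `w''`, `w'''` are explicit away from `λ = 1`. Moreover `w` and `w - 1` factor as
`(λ-4)(2λ+1)²/(4(λ-1)³)` and `-27λ/(4(λ-1)³)`, so both sides of the identity become explicit
rational functions of `λ` whose only possible poles are at `λ = 0, 1, 4, -1/2`.
-/

open Set

section

variable {𝕜 : Type*} [NontriviallyNormedField 𝕜]

noncomputable def schwarzian (f : 𝕜 → 𝕜) (x : 𝕜) : 𝕜 :=
  (2 * deriv f x * deriv (deriv (deriv f)) x - 3 * deriv (deriv f) x ^ 2) / deriv f x ^ 2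

def twoTermLaurent (c p q : 𝕜) (m : ℤ) (x : 𝕜) : 𝕜 :=
  p * (x - c) ^ m + q * (x - c) ^ (m - 1)

variable (c p q : 𝕜) (m : ℤ)

theorem hasDerivAt_twoTermLaurent {x : 𝕜} (hx : x ≠ c) :
    HasDerivAt (twoTermLaurent c p q m)
      (twoTermLaurent c (p * m) (q * (m - 1)) (m - 1) x) x := by
  have hpow (n : ℤ) : HasDerivAt (fun y => (y - c) ^ n) (n * (x - c) ^ (n - 1)) x :=
    (hasDerivAt_zpow n (x - c) (.inl (sub_ne_zero.mpr hx))).comp_sub_const x c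
  refine (((hpow m).const_mul p).add ((hpow (m - 1)).const_mul q)).congr_deriv ?_
  simp only [twoTermLaurent]
  push_cast
  ring

theorem eqOn_deriv_twoTermLaurent :
    EqOn (deriv (twoTermLaurent c p q m)) (twoTermLaurent c (p * m) (q * (m - 1)) (m - 1))
      {c}ᶜ :=
  fun _ hx => (hasDerivAt_twoTermLaurent c p q m hx).deriv

end

theorem wCover_eq_one_add_twoTermLaurent :
    wCover = fun x => 1 + twoTermLaurent 1 (-27 / 4) (-27 / 4) (-2) x := by
  funext x
  simp only [wCover, twoTermLaurent]
  rcases eq_or_ne x 1 with rfl | hx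
  · simp
  · have : x - 1 ≠ 0 := sub_ne_zero.mpr hx
    norm_num [zpow_neg]
    field_simp
    ring

theorem eqOn_deriv_wCover :
    EqOn (deriv wCover) (twoTermLaurent 1 (27 / 2) (81 / 4) (-3)) {1}ᶜ := by
  rw [wCover_eq_one_add_twoTermLaurent, deriv_const_add']
  convert eqOn_deriv_twoTermLaurent (1 : ℂ) (-27 / 4) (-27 / 4) (-2) using 2 <;> norm_num

theorem eqOn_deriv_deriv_wCover :
    EqOn (deriv (deriv wCover)) (twoTermLaurent 1 (-81 / 2) (-81) (-4)) {1}ᶜ := by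
  refine (eqOn_deriv_wCover.deriv isOpen_compl_singleton).trans ?_
  convert eqOn_deriv_twoTermLaurent (1 : ℂ) (27 / 2) (81 / 4) (-3) using 2 <;> norm_num

theorem eqOn_deriv_deriv_deriv_wCover :
    EqOn (deriv (deriv (deriv wCover))) (twoTermLaurent 1 162 405 (-5)) {1}ᶜ := by
  refine (eqOn_deriv_deriv_wCover.deriv isOpen_compl_singleton).trans ?_
  convert eqOn_deriv_twoTermLaurent (1 : ℂ) (-81 / 2) (-81) (-4) using 2 <;> norm_num

section

variable {l : ℂ}

theorem deriv_wCover (hl : l ≠ 1) :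
    deriv wCover l = 27 * (2 * l + 1) / (4 * (l - 1) ^ 4) := by
  rw [eqOn_deriv_wCover hl, twoTermLaurent]
  norm_num [zpow_neg]
  field_simp
  ring

theorem deriv_deriv_wCover (hl : l ≠ 1) :
    deriv (deriv wCover) l = -81 * (l + 1) / (2 * (l - 1) ^ 5) := by
  rw [eqOn_deriv_deriv_wCover hl, twoTermLaurent]
  norm_num [zpow_neg]
  field_simp
  ring

theorem deriv_deriv_deriv_wCover (hl : l ≠ 1) :
    deriv (deriv (deriv wCover)) l = 81 * (2 * l + 3) / (l - 1) ^ 6 := by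
  rw [eqOn_deriv_deriv_deriv_wCover hl, twoTermLaurent]
  norm_num [zpow_neg]
  field_simp
  ring

theorem wCover_eq_div (hl : l ≠ 1) :
    wCover l = (l - 4) * (2 * l + 1) ^ 2 / (4 * (l - 1) ^ 3) := by
  rw [wCover]
  field_simp
  ring

theorem wCover_sub_one : wCover l - 1 = -27 * l / (4 * (l - 1) ^ 3) := by
  rw [wCover]
  ring

theorem schwarzian_wCover (hl : l ≠ 1) (h2 : 2 * l + 1 ≠ 0) :
    schwarzian wCover l = -12 * (l ^ 2 + 2 * l + 3) / ((l - 1) ^ 2 * (2 * l + 1) ^ 2) := by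
  rw [schwarzian, deriv_wCover hl, deriv_deriv_wCover hl, deriv_deriv_deriv_wCover hl]
  field_simp
  ring

theorem deriv_wCover_sq_mul_sigmaStar_wCover (h0 : l ≠ 0) (h1 : l ≠ 1) (h4 : l ≠ 4)
    (h2 : 2 * l + 1 ≠ 0) :
    deriv wCover l ^ 2 * sigmaStar (wCover l) =
      2187 / (4 * (l - 1) ^ 2 * (l - 4) ^ 2 * (2 * l + 1) ^ 2)
        + 15 * (2 * l + 1) ^ 2 / (16 * l ^ 2 * (l - 1) ^ 2)
        + 309 / (16 * l * (l - 1) ^ 2 * (l - 4)) := by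
  rw [sigmaStar, wCover_sub_one, wCover_eq_div h1, deriv_wCover h1]
  field_simp
  ring

end

theorem sigma_match_no6_general (l : ℂ)
    (h0 : l * (l - 1) * (l - 4) * (2 * l + 1) ≠ 0) :
    3 * (20 - 33 * l + 28 * l ^ 2 - 7 * l ^ 3 + l ^ 4)
        / (4 * l ^ 2 * (4 - 5 * l + l ^ 2) ^ 2)
      = (deriv wCover l) ^ 2 * sigmaStar (wCover l)
        + (2 * deriv wCover l * deriv (deriv (deriv wCover)) l
            - 3 * (deriv (deriv wCover) l) ^ 2) / (deriv wCover l) ^ 2 := by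
  obtain ⟨⟨⟨hl0, hl1⟩, hl4⟩, hl2⟩ : ((l ≠ 0 ∧ l ≠ 1) ∧ l ≠ 4) ∧ 2 * l + 1 ≠ 0 := by
    simpa only [mul_ne_zero_iff, sub_ne_zero] using h0
  rw [deriv_wCover_sq_mul_sigmaStar_wCover hl0 hl1 hl4 hl2, ← schwarzian,
    schwarzian_wCover hl1 hl2, show 4 - 5 * l + l ^ 2 = (l - 1) * (l - 4) by ring]
  -- `field_simp` normalises `2 * l + 1` to `l * 2 + 1` before looking for this hypothesis
  have : l * 2 + 1 ≠ 0 := by rwa [mul_comm]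
  field_simp
  ring

/-- The sigma invariant of the Picard-Fuchs equation of the family of twists No. 6
equals the pullback of `σ*` through the degree-3 map `w`, via the full cocycle
formula including the Schwarzian derivative of `w`. -/
theorem sigma_match_no6 (l : ℂ)
    (h0 : l * (l - 1) * (l - 4) * (2 * l + 1) ≠ 0)
    (h1 : 4 * (l - 1) ^ 3 ≠ 27 * l) :
    3 * (20 - 33 * l + 28 * l ^ 2 - 7 * l ^ 3 + l ^ 4)
        / (4 * l ^ 2 * (4 - 5 * l + l ^ 2) ^ 2)
      = (deriv wCover l) ^ 2 * sigmaStar (wCover l)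
        + (2 * deriv wCover l * deriv (deriv (deriv wCover)) l
            - 3 * (deriv (deriv wCover) l) ^ 2) / (deriv wCover l) ^ 2 :=
  sigma_match_no6_general l h0
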